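/- Let φ₀ : Γ̃ → G have conjugation-stabilizer exactly Z(G), and suppose there exist g ∈ G and t ∈ Z(G) with φ₀ ∘ Ad_c = Ad_g ∘ φ₀ and g² φ₀(c²)⁻¹ = t². Then φ₀ extends to a homomorphism φ : Γ → G with φ|_{Γ̃} = φ₀ and φ(c) = g t⁻¹. In particular, if the obstruction class [g² φ₀(c²)⁻¹] ∈ Z(G)/2Z(G) is trivial, φ₀ extends to Γ. -/

import Mathlib

theorem indexTwoNormal {Γ : Type*} [Group Γ] (H : Subgroup Γ) (h : H.index = 2) :
    H.Normal := by
  constructor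
  intro n hn g
  rw [Subgroup.mul_mem_iff_of_index_two h, Subgroup.mul_mem_iff_of_index_two h, inv_mem_iff]
  simp [hn]

/-- The automorphism `Ad_c : x ↦ c x c⁻¹` of an index-two (hence normal) subgroup. -/
def adSub {Γ : Type*} [Group Γ] (H : Subgroup Γ) (h : H.index = 2) (c : Γ) : H →* H where
  toFun x := ⟨c * x * c⁻¹, (indexTwoNormal H h).conj_mem x x.2 c⟩
  map_one' := by ext; simp
  map_mul' x y := by ext; first | simp [mul_assoc] | (simp only [Subgroup.coe_mul, MulMemClass.coe_mul]; group)

/-!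
Every element of `Γ ∖ Γ̃` has the form `x c` with `x ∈ Γ̃`, so the extension is forced to be
`φ(x) = φ₀(x)` on `Γ̃` and `φ(x) = φ₀(x c⁻¹) b` off it, where `b = g t⁻¹`. This is a
homomorphism as soon as `b` induces `Ad_c` on the image of `φ₀` and `b² = φ₀(c²)`; since `t` is
central, `b` conjugates like `g`, and `b² = g² t⁻² = φ₀(c²)` is exactly the vanishing of the
obstruction.
-/

namespace Subgroup

variable {Γ G : Type*} [Group Γ] [Group G] {H : Subgroup Γ} {c : Γ}

theorem mul_inv_mem_of_index_two (h2 : H.index = 2) (hc : c ∉ H) {x : Γ} (hx : x ∉ H) :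
    x * c⁻¹ ∈ H := by
  rw [mul_mem_iff_of_index_two h2, inv_mem_iff]
  exact iff_of_false hx hc

open Classical in
noncomputable def extendOfIndexTwo (h2 : H.index = 2) (hc : c ∉ H) (φ₀ : H →* G) (b : G)
    (x : Γ) : G :=
  if hx : x ∈ H then φ₀ ⟨x, hx⟩ else φ₀ ⟨x * c⁻¹, mul_inv_mem_of_index_two h2 hc hx⟩ * b

section extendOfIndexTwo

variable (h2 : H.index = 2) (hc : c ∉ H) (φ₀ : H →* G) {b : G}

theorem extendOfIndexTwo_of_mem {x : Γ} (hx : x ∈ H) : extendOfIndexTwo h2 hc φ₀ b x = φ₀ ⟨x, hx⟩ :=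
  dif_pos hx

theorem extendOfIndexTwo_of_notMem {x : Γ} (hx : x ∉ H) :
    extendOfIndexTwo h2 hc φ₀ b x = φ₀ ⟨x * c⁻¹, mul_inv_mem_of_index_two h2 hc hx⟩ * b :=
  dif_neg hx

variable {h2 hc φ₀}

theorem extendOfIndexTwo_mul_of_mem (hconj : ∀ x : H, b * φ₀ x * b⁻¹ = φ₀ (adSub H h2 c x))
    (x : Γ) {y : Γ} (hy : y ∈ H) :
    extendOfIndexTwo h2 hc φ₀ b (x * y) = extendOfIndexTwo h2 hc φ₀ b x * φ₀ ⟨y, hy⟩ := by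
  by_cases hx : x ∈ H
  · rw [extendOfIndexTwo_of_mem h2 hc φ₀ (mul_mem hx hy), extendOfIndexTwo_of_mem h2 hc φ₀ hx,
      ← map_mul]
    rfl
  · have hxy : x * y ∉ H := fun h => hx (by simpa using mul_mem h (inv_mem hy))
    have hcy : φ₀ (adSub H h2 c ⟨y, hy⟩) * b = b * φ₀ ⟨y, hy⟩ := by
      rw [← hconj, inv_mul_cancel_right]
    have hsplit : (⟨x * y * c⁻¹, mul_inv_mem_of_index_two h2 hc hxy⟩ : H) =
        ⟨x * c⁻¹, mul_inv_mem_of_index_two h2 hc hx⟩ * adSub H h2 c ⟨y, hy⟩ :=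
      Subtype.ext (by simp [adSub, mul_assoc])
    rw [extendOfIndexTwo_of_notMem h2 hc φ₀ hxy, extendOfIndexTwo_of_notMem h2 hc φ₀ hx, hsplit,
      map_mul, mul_assoc, hcy, mul_assoc]

theorem extendOfIndexTwo_mul_self (hsq : b ^ 2 = φ₀ ⟨c ^ 2, sq_mem_of_index_two h2 c⟩) (x : Γ) :
    extendOfIndexTwo h2 hc φ₀ b (x * c) = extendOfIndexTwo h2 hc φ₀ b x * b := by
  by_cases hx : x ∈ H
  · have hxc : x * c ∉ H := by rw [mul_mem_iff_of_index_two h2]; exact fun h => hc (h.1 hx)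
    rw [extendOfIndexTwo_of_notMem h2 hc φ₀ hxc, extendOfIndexTwo_of_mem h2 hc φ₀ hx]
    simp only [mul_inv_cancel_right]
  · have hxc : x * c ∈ H := by rw [mul_mem_iff_of_index_two h2]; exact iff_of_false hx hc
    have hsplit : (⟨x * c, hxc⟩ : H) =
        ⟨x * c⁻¹, mul_inv_mem_of_index_two h2 hc hx⟩ * ⟨c ^ 2, sq_mem_of_index_two h2 c⟩ :=
      Subtype.ext (by simp [pow_two, mul_assoc])
    rw [extendOfIndexTwo_of_mem h2 hc φ₀ hxc, extendOfIndexTwo_of_notMem h2 hc φ₀ hx, hsplit,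
      map_mul, ← hsq, pow_two, mul_assoc]

theorem extendOfIndexTwo_mul (hconj : ∀ x : H, b * φ₀ x * b⁻¹ = φ₀ (adSub H h2 c x))
    (hsq : b ^ 2 = φ₀ ⟨c ^ 2, sq_mem_of_index_two h2 c⟩) (x y : Γ) :
    extendOfIndexTwo h2 hc φ₀ b (x * y) =
      extendOfIndexTwo h2 hc φ₀ b x * extendOfIndexTwo h2 hc φ₀ b y := by
  by_cases hy : y ∈ H
  · rw [extendOfIndexTwo_mul_of_mem hconj x hy, extendOfIndexTwo_of_mem h2 hc φ₀ hy]
  · have hyc := mul_inv_mem_of_index_two h2 hc hy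
    have hy' : y = y * c⁻¹ * c := (inv_mul_cancel_right y c).symm
    rw [hy', ← mul_assoc, extendOfIndexTwo_mul_self hsq, extendOfIndexTwo_mul_self hsq,
      extendOfIndexTwo_mul_of_mem hconj x hyc, extendOfIndexTwo_of_mem h2 hc φ₀ hyc, mul_assoc]

end extendOfIndexTwo

theorem exists_monoidHom_extend_of_index_two (h2 : H.index = 2) (hc : c ∉ H) (φ₀ : H →* G)
    {b : G} (hconj : ∀ x : H, b * φ₀ x * b⁻¹ = φ₀ (adSub H h2 c x))
    (hsq : b ^ 2 = φ₀ ⟨c ^ 2, sq_mem_of_index_two h2 c⟩) :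
    ∃ φ : Γ →* G, (∀ (x : Γ) (hx : x ∈ H), φ x = φ₀ ⟨x, hx⟩) ∧ φ c = b := by
  refine ⟨MonoidHom.mk' (extendOfIndexTwo h2 hc φ₀ b) (extendOfIndexTwo_mul hconj hsq),
    fun x hx => extendOfIndexTwo_of_mem h2 hc φ₀ hx, ?_⟩
  have hone : extendOfIndexTwo h2 hc φ₀ b 1 = 1 :=
    (extendOfIndexTwo_of_mem h2 hc φ₀ (one_mem H)).trans φ₀.map_one
  simpa [hone] using extendOfIndexTwo_mul_self (hc := hc) hsq 1

end Subgroup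

theorem extension_of_trivial_obstruction_general {Γ G : Type*} [Group Γ] [Group G] (H : Subgroup Γ)
    (h2 : H.index = 2) (c : Γ) (hc : c ∉ H) (φ₀ : H →* G) (g t : G)
    (hg : ∀ x : H, φ₀ (adSub H h2 c x) = g * φ₀ x * g⁻¹)
    (ht : t ∈ Subgroup.center G)
    (hobs : g ^ 2 * (φ₀ ⟨c ^ 2, Subgroup.sq_mem_of_index_two h2 c⟩)⁻¹ = t ^ 2) :
    ∃ φ : Γ →* G, (∀ (x : Γ) (hx : x ∈ H), φ x = φ₀ ⟨x, hx⟩) ∧ φ c = g * t⁻¹ := by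
  have htinv : ∀ y : G, y * t⁻¹ = t⁻¹ * y := Subgroup.mem_center_iff.mp (inv_mem ht)
  refine Subgroup.exists_monoidHom_extend_of_index_two h2 hc φ₀ (fun x => ?_) ?_
  · rw [hg, mul_inv_rev, inv_inv, mul_assoc g t⁻¹, ← htinv (φ₀ x)]
    group
  · rw [mul_inv_eq_iff_eq_mul] at hobs
    rw [Commute.mul_pow (htinv g), hobs, inv_pow, ← Subgroup.mem_center_iff.mp (pow_mem ht 2),
      mul_inv_cancel_right]

/-- If `φ₀ : Γ̃ → G` has conjugation-stabilizer `Z(G)`,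
`φ₀ ∘ Ad_c = Ad_g ∘ φ₀`, and the obstruction `g² φ₀(c²)⁻¹` is a square `t²` of a central
element, then `φ₀` extends to a homomorphism `φ : Γ → G` with `φ(c) = g t⁻¹`. -/
theorem extension_of_trivial_obstruction {Γ G : Type*} [Group Γ] [Group G] (H : Subgroup Γ)
    (h2 : H.index = 2) (c : Γ) (hc : c ∉ H) (φ₀ : H →* G) (g t : G)
    (hZ : ∀ h : G, (∀ x : H, h * φ₀ x * h⁻¹ = φ₀ x) ↔ h ∈ Subgroup.center G)
    (hg : ∀ x : H, φ₀ (adSub H h2 c x) = g * φ₀ x * g⁻¹)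
    (ht : t ∈ Subgroup.center G)
    (hobs : g ^ 2 * (φ₀ ⟨c ^ 2, Subgroup.sq_mem_of_index_two h2 c⟩)⁻¹ = t ^ 2) :
    ∃ φ : Γ →* G, (∀ (x : Γ) (hx : x ∈ H), φ x = φ₀ ⟨x, hx⟩) ∧ φ c = g * t⁻¹ :=
  extension_of_trivial_obstruction_general H h2 c hc φ₀ g t hg ht hobs
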